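/- arXiv:1012.4727 — 3 statements merged into one kernel-verified Lean document; each statement's English description precedes it below -/
import Mathlib

section
/- Let φ be a real number in [0,1) and for each k = 1, ..., n let β_k ∈ {0/8,...,7/8} satisfy |2^{k-1}φ - β_k|_{mod 1} < 1/8. Define bits x_n, x_{n+1}, x_{n+2} by writing β_n = 0.x_n x_{n+1} x_{n+2} in binary, and for k = n-1 down to 1 define x_k ∈ {0,1} to be the unique bit such that |0.x_k x_{k+1} x_{k+2} - β_k|_{mod 1} < 1/4. Then the resulting binary fraction satisfies |0.x_1 x_2 ... x_{n+2} - φ|_{mod 1} < 2^{-(n+2)}. -/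
open Real Finset

/-- Distance from a real number to the nearest integer ("|x| mod 1"). -/
noncomputable def distMod1 (x : ℝ) : ℝ := |x - round x|

/-! With `S_k = 0.x_k … x_{n+2}` and `θ_k = 2^{k-1} φ`, the bound
`|S_k - θ_k|_{mod 1} < 2^{-(n-k+3)}` goes down from `k = n`, where `S_n = β_n`.
Since `2 (S_k - θ_k) = x_k + (S_{k+1} - θ_{k+1})`, the error at `k` is half the error at `k + 1`,
up to the ambiguity of halving modulo 1: `S_k - θ_k` could instead lie near a half-integer. The
coarse data exclude this: `β_k` is within `1/8` of `θ_k`, the first three bits within `1/4` of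
`β_k`, and the remaining bits contribute less than `1/8 - 2^{-(n-k+3)}`. -/

lemma distMod1_le_abs_sub_intCast (x : ℝ) (m : ℤ) : distMod1 x ≤ |x - m| :=
  round_le x m

lemma distMod1_intCast_add (m : ℤ) (x : ℝ) : distMod1 (m + x) = distMod1 x := by
  rw [distMod1, distMod1, round_intCast_add, Int.cast_add, add_sub_add_left_eq_sub]

lemma distMod1_neg (x : ℝ) : distMod1 (-x) = distMod1 x := by
  have h (y : ℝ) : distMod1 (-y) ≤ distMod1 y := by
    calc distMod1 (-y) ≤ |-y - ((-round y : ℤ) : ℝ)| := distMod1_le_abs_sub_intCast _ _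
      _ = distMod1 y := by rw [distMod1, ← abs_neg]; push_cast; ring_nf
  exact le_antisymm (h x) (by simpa using h (-x))

lemma distMod1_sub_comm (a b : ℝ) : distMod1 (a - b) = distMod1 (b - a) := by
  rw [← distMod1_neg, neg_sub]

lemma distMod1_add_le (a b : ℝ) : distMod1 (a + b) ≤ distMod1 a + distMod1 b :=
  calc distMod1 (a + b) ≤ |a + b - ((round a + round b : ℤ) : ℝ)| :=
        distMod1_le_abs_sub_intCast _ _
    _ = |(a - round a) + (b - round b)| := by push_cast; ring_nf
    _ ≤ distMod1 a + distMod1 b := abs_add_le _ _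

lemma half_sub_abs_sub_le_distMod1 (w : ℝ) (t : ℤ) : 1 / 2 - |w - (t + 1 / 2)| ≤ distMod1 w := by
  have hodd : (1 : ℝ) ≤ |((2 * (t - round w) + 1 : ℤ) : ℝ)| := by
    rw [← Int.cast_abs, ← Int.cast_one, Int.cast_le]
    exact Int.one_le_abs (by omega)
  have htri : |(t : ℝ) + 1 / 2 - round w| ≤ |w - (t + 1 / 2)| + |w - round w| := by
    simpa [abs_sub_comm] using abs_sub_le ((t : ℝ) + 1 / 2) w (round w)
  have hscale : |((2 * (t - round w) + 1 : ℤ) : ℝ)| = 2 * |(t : ℝ) + 1 / 2 - round w| := by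
    rw [show ((2 * (t - round w) + 1 : ℤ) : ℝ) = 2 * ((t : ℝ) + 1 / 2 - round w) by push_cast; ring,
      abs_mul, abs_two]
  rw [distMod1]
  linarith

lemma distMod1_lt_of_distMod1_two_mul_lt {w ε : ℝ} (h2w : distMod1 (2 * w) < 2 * ε)
    (hw : distMod1 w < 1 / 2 - ε) : distMod1 w < ε := by
  obtain ⟨t, ht | ht⟩ := Int.even_or_odd' (round (2 * w))
  · calc distMod1 w ≤ |w - t| := distMod1_le_abs_sub_intCast w t
      _ = distMod1 (2 * w) / 2 := by
        rw [distMod1, ht, ← abs_two, ← abs_div]; push_cast; ring_nf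
      _ < ε := by linarith
  · have hclose : |w - (t + 1 / 2)| = distMod1 (2 * w) / 2 := by
      rw [distMod1, ht, ← abs_two, ← abs_div]; push_cast; ring_nf
    linarith [half_sub_abs_sub_le_distMod1 w t]

/-- The binary fraction `0.x_k x_{k+1} … x_{k+len-1}`. -/
noncomputable def binFrac (x : ℕ → ℝ) (k len : ℕ) : ℝ :=
  ∑ i ∈ range len, x (k + i) / 2 ^ (i + 1)

lemma binFrac_add (x : ℕ → ℝ) (k m len : ℕ) :
    binFrac x k (m + len) = binFrac x k m + binFrac x (k + m) len / 2 ^ m := by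
  rw [binFrac, binFrac, binFrac, sum_range_add, sum_div]
  congr 1
  refine sum_congr rfl fun i _ => ?_
  rw [← add_assoc]
  ring

lemma binFrac_one (x : ℕ → ℝ) (k : ℕ) : binFrac x k 1 = x k / 2 := by
  simp [binFrac]

lemma binFrac_three (x : ℕ → ℝ) (k : ℕ) :
    binFrac x k 3 = x k / 2 + x (k + 1) / 4 + x (k + 2) / 8 := by
  simp [binFrac, sum_range_succ]; norm_num

lemma binFrac_one_eq_sum_Icc (x : ℕ → ℝ) (len : ℕ) :
    binFrac x 1 len = ∑ j ∈ Icc 1 len, x j / 2 ^ j := by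
  rw [← Ico_add_one_right_eq_Icc, sum_Ico_eq_sum_range, add_tsub_cancel_right, binFrac]
  simp only [add_comm 1]

lemma abs_binFrac_le {x : ℕ → ℝ} (hx : ∀ j, |x j| ≤ 1) (k len : ℕ) :
    |binFrac x k len| ≤ 1 - 1 / 2 ^ len := by
  induction len generalizing k with
  | zero => simp [binFrac]
  | succ len ih =>
    rw [add_comm, binFrac_add, binFrac_one, pow_one]
    calc |x k / 2 + binFrac x (k + 1) len / 2| ≤ |x k| / 2 + |binFrac x (k + 1) len| / 2 := by
          simpa [abs_div] using abs_add_le (x k / 2) (binFrac x (k + 1) len / 2)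
      _ ≤ 1 / 2 + (1 - 1 / 2 ^ len) / 2 := by gcongr; exacts [hx k, ih _]
      _ = 1 - 1 / 2 ^ (1 + len) := by rw [pow_add]; field_simp; ring

lemma distMod1_binFrac_sub_lt_of_succ {x : ℕ → ℝ} (hx : ∀ j, x j = 0 ∨ x j = 1) {k len : ℕ}
    {θ β : ℝ} (hnext : distMod1 (binFrac x (k + 1) (len + 2) - 2 * θ) < 1 / 2 ^ (len + 2))
    (hβ : distMod1 (θ - β) < 1 / 8) (hbit : distMod1 (binFrac x k 3 - β) < 1 / 4) :
    distMod1 (binFrac x k (len + 3) - θ) < 1 / 2 ^ (len + 3) := by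
  apply distMod1_lt_of_distMod1_two_mul_lt
  · have hdouble :
        2 * (binFrac x k (len + 3) - θ) = x k + (binFrac x (k + 1) (len + 2) - 2 * θ) := by
      rw [show len + 3 = 1 + (len + 2) by ring, binFrac_add, binFrac_one]; ring
    obtain ⟨m, hm⟩ : ∃ m : ℤ, x k = m := by
      rcases hx k with h | h
      exacts [⟨0, by simp [h]⟩, ⟨1, by simp [h]⟩]
    rw [hdouble, hm, distMod1_intCast_add]
    convert hnext using 1
    rw [pow_succ]; ring
  · have htail : |binFrac x (k + 3) len| ≤ 1 - 1 / 2 ^ len :=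
      abs_binFrac_le (fun j => by rcases hx j with h | h <;> simp [h]) _ _
    have hsplit : binFrac x k (len + 3) - θ
        = binFrac x (k + 3) len / 8 + ((binFrac x k 3 - β) + (β - θ)) := by
      rw [add_comm len, binFrac_add]; ring
    calc distMod1 (binFrac x k (len + 3) - θ)
        ≤ |binFrac x (k + 3) len / 8| + (distMod1 (binFrac x k 3 - β) + distMod1 (β - θ)) := by
          rw [hsplit]
          refine (distMod1_add_le _ _).trans (add_le_add ?_ (distMod1_add_le _ _))
          simpa using distMod1_le_abs_sub_intCast (binFrac x (k + 3) len / 8) 0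
      _ < (1 - 1 / 2 ^ len) / 8 + (1 / 4 + 1 / 8) := by
          have htail8 : |binFrac x (k + 3) len / 8| ≤ (1 - 1 / 2 ^ len) / 8 := by
            rw [abs_div, abs_of_pos (by norm_num : (0 : ℝ) < 8)]
            gcongr
          rw [distMod1_sub_comm β]
          linarith
      _ = 1 / 2 - 1 / 2 ^ (len + 3) := by rw [pow_add]; ring

theorem stmt_2_general (n : ℕ) (hn : 1 ≤ n) (φ : ℝ) (β : ℕ → ℝ)
    (hβapprox : ∀ k ∈ Finset.Icc 1 n, distMod1 (2 ^ (k - 1) * φ - β k) < 1 / 8)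
    (x : ℕ → ℝ) (hbits : ∀ k, x k = 0 ∨ x k = 1)
    (hinit : β n = x n / 2 + x (n + 1) / 4 + x (n + 2) / 8)
    (hstep : ∀ k, 1 ≤ k → k < n →
      distMod1 (x k / 2 + x (k + 1) / 4 + x (k + 2) / 8 - β k) < 1 / 4) :
    distMod1 ((∑ j ∈ Finset.Icc 1 (n + 2), x j / 2 ^ j) - φ) < 1 / 2 ^ (n + 2) := by
  have hβ (k : ℕ) (hk : k + 1 ≤ n) : distMod1 (2 ^ k * φ - β (k + 1)) < 1 / 8 := by
    simpa using hβapprox (k + 1) (mem_Icc.2 ⟨by omega, hk⟩)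
  have herror (i : ℕ) : ∀ k, k + 1 + i = n →
      distMod1 (binFrac x (k + 1) (i + 3) - 2 ^ k * φ) < 1 / 2 ^ (i + 3) := by
    induction i with
    | zero =>
      rintro k rfl
      rw [binFrac_three, ← hinit, distMod1_sub_comm]
      exact (hβ k le_rfl).trans_eq (by norm_num)
    | succ i ih =>
      intro k hk
      refine distMod1_binFrac_sub_lt_of_succ hbits ?_ (hβ k (by omega)) ?_
      · rw [← mul_assoc, ← pow_succ']
        exact ih (k + 1) (by omega)
      · rw [binFrac_three]
        exact hstep (k + 1) (by omega) (by omega)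
  obtain ⟨m, rfl⟩ : ∃ m, n = m + 1 := ⟨n - 1, by omega⟩
  simpa [binFrac_one_eq_sum_Icc] using herror m 0 (by omega)

/-- Correctness of Kitaev's classical post-processing: if each β_k ∈ {0/8,…,7/8}
approximates 2^{k-1}φ within 1/8 (mod 1), the bits x_n, x_{n+1}, x_{n+2} are read off
from β_n = 0.x_n x_{n+1} x_{n+2}, and each earlier bit x_k is chosen so that
|0.x_k x_{k+1} x_{k+2} - β_k|_{mod 1} < 1/4, then
|0.x_1 x_2 … x_{n+2} - φ|_{mod 1} < 2^{-(n+2)}. -/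
theorem stmt_2 (n : ℕ) (hn : 1 ≤ n) (φ : ℝ) (hφ : φ ∈ Set.Ico (0 : ℝ) 1)
    (β : ℕ → ℝ) (hβ : ∀ k ∈ Finset.Icc 1 n, ∃ j : Fin 8, β k = (j : ℝ) / 8)
    (hβapprox : ∀ k ∈ Finset.Icc 1 n, distMod1 (2 ^ (k - 1) * φ - β k) < 1 / 8)
    (x : ℕ → ℝ) (hbits : ∀ k, x k = 0 ∨ x k = 1)
    (hinit : β n = x n / 2 + x (n + 1) / 4 + x (n + 2) / 8)
    (hstep : ∀ k, 1 ≤ k → k < n →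
      distMod1 (x k / 2 + x (k + 1) / 4 + x (k + 2) / 8 - β k) < 1 / 4) :
    distMod1 ((∑ j ∈ Finset.Icc 1 (n + 2), x j / 2 ^ j) - φ) < 1 / 2 ^ (n + 2) :=
  stmt_2_general n hn φ β hβapprox x hbits hinit hstep
end

section
/- Let φ ∈ [0,1) and suppose x/2^n ≤ φ ≤ (x+1)/2^n for an integer x. The quantum phase estimation procedure on n qubits, which measures the state QFT†·(2^{-n/2} Σ_{k=0}^{2^n-1} e^{2πiφk}|k⟩) in the computational basis, returns outcome y with probability |2^{-n} Σ_{k=0}^{2^n-1} e^{2πi(φ - y/2^n)k}|². The total probability of returning x or x+1 (mod 2^n) is at least 8/π². -/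
open Real Complex Finset

/-!
The outcome probability is the squared modulus of a normalized geometric sum,
`P y = sin² (π 2ⁿ δ) / (2²ⁿ sin² (π δ))` with `δ = φ - y / 2ⁿ`, hence `P y ≥ sinc² (π 2ⁿ δ)`
because `|sin t| ≤ |t|`. With `θ = 2ⁿ φ - x ∈ [0, 1]` the two outcomes `x`, `x + 1` give
`sinc² (π θ) + sinc² (π (θ - 1)) = sin² (π θ) (θ² + (1 - θ)²) / (π² θ² (1 - θ)²)`, which is
at least its value `8 / π²` at `θ = 1 / 2`. In the variable `s = 2 θ - 1` this is the inequality
`(1 - s²)² ≤ cos² (π s / 2) (1 + s²)`, which follows from `cos t ≥ 1 - t² / 2` for `|s| ≤ 1 / 2`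
and from `sin t ≥ t - t³ / 6` applied to `cos (π s / 2) = sin (π (1 - s) / 2)` for `|s| ≥ 1 / 2`.
-/

theorem norm_geom_sum_exp_mul_abs_sin (N : ℕ) (t : ℝ) :
    ‖∑ k ∈ range N, exp (I * t) ^ k‖ * |Real.sin (t / 2)| = |Real.sin (N * t / 2)| := by
  have h := congrArg (‖·‖) (geom_sum_mul (exp (I * t)) N)
  rw [← Complex.exp_nat_mul, show (N : ℂ) * (I * t) = I * ((N * t : ℝ) : ℂ) by push_cast; ring,
    norm_mul, norm_exp_I_mul_ofReal_sub_one, norm_exp_I_mul_ofReal_sub_one] at h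
  simp only [norm_mul, Real.norm_eq_abs, abs_two] at h
  linarith

theorem sinc_sq_le_norm_sq_avg_exp (N : ℕ) (hN : N ≠ 0) (α : ℝ) :
    sinc (π * N * α) ^ 2 ≤ ‖(1 / (N : ℂ)) * ∑ k ∈ range N, exp (2 * π * I * α * k)‖ ^ 2 := by
  rcases eq_or_ne α 0 with rfl | hα
  · simp [hN]
  have hsum : ∑ k ∈ range N, exp (2 * π * I * α * k) =
      ∑ k ∈ range N, exp (I * (2 * π * α : ℝ)) ^ k := by
    refine sum_congr rfl fun k _ => ?_
    rw [← Complex.exp_nat_mul]; push_cast; ring_nf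
  have hNpos : (0 : ℝ) < N := by positivity
  have harg : π * N * α ≠ 0 := by positivity
  have hdir := norm_geom_sum_exp_mul_abs_sin N (2 * π * α)
  rw [show 2 * π * α / 2 = π * α by ring, show N * (2 * π * α) / 2 = π * N * α by ring] at hdir
  have hsin : |Real.sin (π * N * α)| ≤ ‖∑ k ∈ range N, exp (I * (2 * π * α : ℝ)) ^ k‖ * |π * α| :=
    hdir ▸ mul_le_mul_of_nonneg_left abs_sin_le_abs (norm_nonneg _)
  have habs : |sinc (π * N * α)| ≤ ‖(1 / (N : ℂ)) * ∑ k ∈ range N, exp (2 * π * I * α * k)‖ := by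
    rw [sinc_of_ne_zero harg, abs_div, hsum, norm_mul, norm_div, norm_one, Complex.norm_natCast,
      div_le_iff₀ (by positivity),
      show |π * N * α| = N * |π * α| by rw [mul_right_comm, abs_mul, abs_mul, Nat.abs_cast]; ring]
    refine hsin.trans_eq ?_
    field_simp
  simpa using pow_le_pow_left₀ (abs_nonneg _) habs 2

theorem pi_sq_le_ten : π ^ 2 ≤ 10 := by nlinarith [pi_lt_d2, pi_pos]

theorem one_sub_sq_sq_le_cos_sq_mul_of_sq_le {s : ℝ} (hs : s ^ 2 ≤ 1 / 4) :
    (1 - s ^ 2) ^ 2 ≤ Real.cos (π * s / 2) ^ 2 * (1 + s ^ 2) := by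
  have hcos : 1 - 5 / 4 * s ^ 2 ≤ Real.cos (π * s / 2) := by
    nlinarith [one_sub_sq_div_two_le_cos (x := π * s / 2),
      mul_le_mul_of_nonneg_right pi_sq_le_ten (sq_nonneg s)]
  calc (1 - s ^ 2) ^ 2 ≤ (1 - 5 / 4 * s ^ 2) ^ 2 * (1 + s ^ 2) := by
        nlinarith [sq_nonneg s, mul_nonneg (sq_nonneg s) (sub_nonneg.2 hs)]
    _ ≤ Real.cos (π * s / 2) ^ 2 * (1 + s ^ 2) := by gcongr; nlinarith

theorem one_sub_sq_sq_le_cos_sq_mul_of_half_le {s : ℝ} (h1 : 1 / 2 ≤ s) (h2 : s ≤ 1) :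
    (1 - s ^ 2) ^ 2 ≤ Real.cos (π * s / 2) ^ 2 * (1 + s ^ 2) := by
  obtain ⟨w, hw0, hw1, rfl⟩ : ∃ w : ℝ, 0 ≤ w ∧ w ≤ 1 / 2 ∧ s = 1 - w :=
    ⟨1 - s, by linarith, by linarith, by ring⟩
  rw [show π * (1 - w) / 2 = π / 2 - π * w / 2 by ring, Real.cos_pi_div_two_sub]
  have hsin : 157 / 100 * w * (1 - 5 / 12 * w ^ 2) ≤ Real.sin (π * w / 2) := by
    have hlin : 157 / 100 * w ≤ π * w / 2 := by nlinarith [pi_gt_d2]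
    have hquad : 1 - 5 / 12 * w ^ 2 ≤ 1 - π ^ 2 * w ^ 2 / 24 := by
      nlinarith [mul_le_mul_of_nonneg_right pi_sq_le_ten (sq_nonneg w)]
    calc 157 / 100 * w * (1 - 5 / 12 * w ^ 2)
        ≤ π * w / 2 * (1 - π ^ 2 * w ^ 2 / 24) :=
          mul_le_mul hlin hquad (by nlinarith) (by positivity)
      _ = π * w / 2 - (π * w / 2) ^ 3 / 6 := by ring
      _ ≤ Real.sin (π * w / 2) := sin_ge_sub_cube (by positivity)
  calc (1 - (1 - w) ^ 2) ^ 2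
        ≤ (157 / 100 * w * (1 - 5 / 12 * w ^ 2)) ^ 2 * (1 + (1 - w) ^ 2) := by
        nlinarith [sq_nonneg w, mul_nonneg (sq_nonneg w) hw0,
          mul_nonneg (sq_nonneg w) (sub_nonneg.2 hw1),
          mul_nonneg (mul_nonneg (sq_nonneg w) hw0) (sub_nonneg.2 hw1)]
    _ ≤ Real.sin (π * w / 2) ^ 2 * (1 + (1 - w) ^ 2) := by gcongr; nlinarith

theorem one_sub_sq_sq_le_cos_sq_mul {s : ℝ} (hs : |s| ≤ 1) :
    (1 - s ^ 2) ^ 2 ≤ Real.cos (π * s / 2) ^ 2 * (1 + s ^ 2) := by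
  rcases le_or_gt (s ^ 2) (1 / 4) with hsq | hsq
  · exact one_sub_sq_sq_le_cos_sq_mul_of_sq_le hsq
  have habs : 1 / 2 ≤ |s| := by nlinarith [sq_abs s, abs_nonneg s]
  have h := one_sub_sq_sq_le_cos_sq_mul_of_half_le habs hs
  rcases abs_choice s with hs' | hs' <;> rw [hs'] at h
  · exact h
  · rwa [neg_sq, mul_neg, neg_div, Real.cos_neg] at h

theorem eight_div_pi_sq_le_sinc_sq_add_sinc_sq {θ : ℝ} (h0 : 0 ≤ θ) (h1 : θ ≤ 1) :
    8 / π ^ 2 ≤ sinc (π * θ) ^ 2 + sinc (π * (θ - 1)) ^ 2 := by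
  have hπ : 8 / π ^ 2 ≤ 1 := by rw [div_le_one (by positivity)]; nlinarith [pi_gt_three]
  rcases h0.eq_or_lt with rfl | h0
  · simpa using hπ.trans (le_add_of_nonneg_right (sq_nonneg (sinc (π * (0 - 1)))))
  rcases h1.eq_or_lt with rfl | h1
  · simpa using hπ.trans (le_add_of_nonneg_left (sq_nonneg (sinc (π * 1))))
  have hsin : Real.sin (π * θ) = Real.cos (π * (2 * θ - 1) / 2) := by
    rw [show π * (2 * θ - 1) / 2 = π / 2 - π * (1 - θ) by ring, Real.cos_pi_div_two_sub,
      show π * (1 - θ) = π - π * θ by ring, Real.sin_pi_sub]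
  have hkey := one_sub_sq_sq_le_cos_sq_mul (s := 2 * θ - 1) (abs_le.2 ⟨by linarith, by linarith⟩)
  rw [← hsin] at hkey
  have hneg : Real.sin (π * (θ - 1)) = -Real.sin (π * θ) := by
    rw [mul_sub, mul_one, Real.sin_sub_pi]
  have hθ1 : θ - 1 ≠ 0 := by linarith
  have hsum : sinc (π * θ) ^ 2 + sinc (π * (θ - 1)) ^ 2 =
      Real.sin (π * θ) ^ 2 * (θ ^ 2 + (θ - 1) ^ 2) / (π ^ 2 * (θ * (θ - 1)) ^ 2) := by
    rw [sinc_of_ne_zero (by positivity), sinc_of_ne_zero (mul_ne_zero pi_ne_zero hθ1), hneg]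
    field_simp
    ring
  rw [hsum, div_le_div_iff₀ (by positivity) (by positivity)]
  linear_combination π ^ 2 / 2 * hkey

theorem stmt_14_general (n : ℕ) (φ : ℝ)
    (x : ℤ) (hx : (x : ℝ) / 2 ^ n ≤ φ) (hx' : φ ≤ ((x : ℝ) + 1) / 2 ^ n)
    (P : ℤ → ℝ)
    (hP : ∀ y : ℤ, P y =
      ‖(1 / (2 : ℂ) ^ n) * ∑ k ∈ Finset.range (2 ^ n),
        Complex.exp (2 * π * Complex.I * ((φ : ℂ) - (y : ℂ) / 2 ^ n) * k)‖ ^ 2) :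
    8 / π ^ 2 ≤ P x + P (x + 1) := by
  have hN : (0 : ℝ) < 2 ^ n := by positivity
  have hsinc : ∀ y : ℤ, sinc (π * 2 ^ n * (φ - y / 2 ^ n)) ^ 2 ≤ P y := fun y => by
    simpa [hP y] using sinc_sq_le_norm_sq_avg_exp (2 ^ n) (by positivity) (φ - y / 2 ^ n)
  set θ := 2 ^ n * φ - x
  have h0 : 0 ≤ θ := by rw [div_le_iff₀ hN] at hx; linarith
  have h1 : θ ≤ 1 := by rw [le_div_iff₀ hN] at hx'; linarith
  have hx_arg : π * 2 ^ n * (φ - x / 2 ^ n) = π * θ := by field_simp; ring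
  have hx1_arg : π * 2 ^ n * (φ - ((x + 1 : ℤ) : ℝ) / 2 ^ n) = π * (θ - 1) := by
    push_cast; field_simp; ring
  calc 8 / π ^ 2 ≤ sinc (π * θ) ^ 2 + sinc (π * (θ - 1)) ^ 2 :=
        eight_div_pi_sq_le_sinc_sq_add_sinc_sq h0 h1
    _ ≤ P x + P (x + 1) := by
        rw [← hx_arg, ← hx1_arg]
        exact add_le_add (hsinc x) (hsinc (x + 1))

/-- Theorem 1 (KLM07): if x/2^n ≤ φ ≤ (x+1)/2^n for an integer x (φ ∈ [0,1)), then the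
QPE measurement outcome distribution
P(y) = |2^{-n} Σ_{k<2^n} e^{2πi(φ - y/2^n)k}|² assigns total probability at least 8/π²
to the outcomes x and x+1 (mod 2^n; P is periodic in y with period 2^n). -/
theorem stmt_14 (n : ℕ) (hn : 0 < n) (φ : ℝ) (hφ : φ ∈ Set.Ico (0 : ℝ) 1)
    (x : ℤ) (hx : (x : ℝ) / 2 ^ n ≤ φ) (hx' : φ ≤ ((x : ℝ) + 1) / 2 ^ n)
    (P : ℤ → ℝ)
    (hP : ∀ y : ℤ, P y =
      ‖(1 / (2 : ℂ) ^ n) * ∑ k ∈ Finset.range (2 ^ n),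
        Complex.exp (2 * π * Complex.I * ((φ : ℂ) - (y : ℂ) / 2 ^ n) * k)‖ ^ 2) :
    8 / π ^ 2 ≤ P x + P (x + 1) :=
  stmt_14_general n φ x hx hx' P hP
end

section
/- For the geometric-sum amplitude in phase estimation: for any real δ with 0 < |δ| ≤ 1/2^{n+1}, (1/4^n)·sin²(2^n πδ)/sin²(πδ) ≥ sin²(2^n π δ)/(2^n π δ)² ≥ 4/π². In particular if |φ - y/2^n| ≤ 2^{-(n+1)} then the QPE measurement returns y with probability at least 4/π². -/
/-!
Summing the geometric series, `|N⁻¹ ∑_{k<N} e^{2πiδk}| = |sin (N π δ)| / (N |sin (π δ)|)`.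
With `N = 2 ^ n` and `x = N π δ`, the bound `|sin (π δ)| ≤ |π δ|` makes this at least
`|sin x| / |x|`, and since `|x| ≤ π / 2`, Jordan's inequality `2 / π * |x| ≤ |sin x|` gives `2 / π`.
-/

open Real Complex Finset

lemma norm_sum_range_exp_sq (N : ℕ) {δ : ℝ} (hδ : Real.sin (π * δ) ≠ 0) :
    ‖∑ k ∈ range N, Complex.exp (2 * π * I * δ * k)‖ ^ 2 =
      Real.sin (N * π * δ) ^ 2 / Real.sin (π * δ) ^ 2 := by
  set z := Complex.exp (I * (2 * (π * δ) : ℝ)) with hz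
  have hnorm (t : ℝ) : ‖Complex.exp (I * (2 * t : ℝ)) - 1‖ ^ 2 = 4 * Real.sin t ^ 2 := by
    rw [norm_exp_I_mul_ofReal_sub_one, mul_div_cancel_left₀ _ two_ne_zero, norm_mul,
      Real.norm_eq_abs, mul_pow, sq_abs]
    norm_num
  have hz1 : ‖z - 1‖ ^ 2 = 4 * Real.sin (π * δ) ^ 2 := hnorm (π * δ)
  have hzN : ‖z ^ N - 1‖ ^ 2 = 4 * Real.sin (N * π * δ) ^ 2 := by
    rw [← hnorm, hz, ← Complex.exp_nat_mul]; push_cast; ring_nf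
  have hzne : z ≠ 1 := by
    rintro h
    rw [h, sub_self, norm_zero] at hz1
    exact hδ (by nlinarith [sq_nonneg (Real.sin (π * δ))])
  have hterm (k : ℕ) : Complex.exp (2 * π * I * δ * k) = z ^ k := by
    rw [hz, ← Complex.exp_nat_mul]; push_cast; ring_nf
  simp_rw [hterm, geom_sum_eq hzne, norm_div, div_pow, hz1, hzN]
  field_simp

lemma four_div_pi_sq_le_sin_sq_div_sq {x : ℝ} (hx0 : x ≠ 0) (hx : |x| ≤ π / 2) :
    4 / π ^ 2 ≤ Real.sin x ^ 2 / x ^ 2 := by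
  rw [le_div_iff₀ (by positivity), ← sq_abs x, ← sq_abs (Real.sin x)]
  calc 4 / π ^ 2 * |x| ^ 2 = (2 / π * |x|) ^ 2 := by ring
    _ ≤ |Real.sin x| ^ 2 := by gcongr; exact mul_abs_le_abs_sin hx

lemma div_mul_sq_le_one_div_sq_mul_div_sin_sq {N x : ℝ} (hN : N ≠ 0) (hx : Real.sin x ≠ 0) (a : ℝ) (ha : 0 ≤ a) :
    a / (N * x) ^ 2 ≤ 1 / N ^ 2 * (a / Real.sin x ^ 2) := by
  rw [one_div_mul_eq_div, div_div, mul_pow, mul_comm (N ^ 2)]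
  exact div_le_div_of_nonneg_left ha (by positivity)
    (mul_le_mul_of_nonneg_right sin_sq_le_sq (sq_nonneg N))

lemma Real.sin_pi_mul_ne_zero_of_abs_lt_one {δ : ℝ} (hδ0 : δ ≠ 0) (hδ : |δ| < 1) :
    Real.sin (π * δ) ≠ 0 := by
  obtain ⟨hlo, hhi⟩ := abs_lt.mp hδ
  rw [Ne, sin_eq_zero_iff_of_lt_of_lt (by nlinarith [pi_pos]) (by nlinarith [pi_pos])]
  exact mul_ne_zero pi_ne_zero hδ0

lemma one_div_two_pow_succ_lt_one (n : ℕ) : (1 : ℝ) / 2 ^ (n + 1) < 1 := by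
  rw [div_lt_one (by positivity)]
  exact one_lt_pow₀ one_lt_two n.succ_ne_zero

lemma abs_two_pow_mul_pi_mul_le {n : ℕ} {δ : ℝ} (hδ : |δ| ≤ 1 / 2 ^ (n + 1)) :
    |2 ^ n * π * δ| ≤ π / 2 := by
  rw [abs_mul, abs_of_pos (by positivity : (0 : ℝ) < 2 ^ n * π)]
  calc 2 ^ n * π * |δ| ≤ 2 ^ n * π * (1 / 2 ^ (n + 1)) := by gcongr
    _ = π / 2 := by rw [pow_succ]; field_simp

/-- Geometric-sum amplitude bound in phase estimation: for 0 < |δ| ≤ 1/2^{n+1},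
(1/4^n)·sin²(2^nπδ)/sin²(πδ) ≥ sin²(2^nπδ)/(2^nπδ)² ≥ 4/π²; in particular for any δ
with |δ| ≤ 2^{-(n+1)} the QPE outcome probability |2^{-n} Σ_k e^{2πiδk}|² is ≥ 4/π². -/
theorem stmt_15 (n : ℕ) :
    (∀ δ : ℝ, 0 < |δ| → |δ| ≤ 1 / 2 ^ (n + 1) →
      Real.sin (2 ^ n * π * δ) ^ 2 / (2 ^ n * π * δ) ^ 2 ≤
        (1 / 4 ^ n) * (Real.sin (2 ^ n * π * δ) ^ 2 / Real.sin (π * δ) ^ 2) ∧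
      4 / π ^ 2 ≤ Real.sin (2 ^ n * π * δ) ^ 2 / (2 ^ n * π * δ) ^ 2) ∧
    (∀ δ : ℝ, |δ| ≤ 1 / 2 ^ (n + 1) →
      4 / π ^ 2 ≤ ‖(1 / (2 : ℂ) ^ n) * ∑ k ∈ Finset.range (2 ^ n),
        Complex.exp (2 * π * Complex.I * (δ : ℂ) * k)‖ ^ 2) := by
  have h4 : (4 : ℝ) ^ n = (2 ^ n) ^ 2 := by rw [← pow_mul, mul_comm, pow_mul]; norm_num
  have hsin {δ : ℝ} (hδ0 : δ ≠ 0) (hδ : |δ| ≤ 1 / 2 ^ (n + 1)) : Real.sin (π * δ) ≠ 0 :=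
    Real.sin_pi_mul_ne_zero_of_abs_lt_one hδ0 (hδ.trans_lt (one_div_two_pow_succ_lt_one n))
  have bounds (δ : ℝ) (hδ0 : δ ≠ 0) (hδ : |δ| ≤ 1 / 2 ^ (n + 1)) :
      Real.sin (2 ^ n * π * δ) ^ 2 / (2 ^ n * π * δ) ^ 2 ≤
        (1 / 4 ^ n) * (Real.sin (2 ^ n * π * δ) ^ 2 / Real.sin (π * δ) ^ 2) ∧
      4 / π ^ 2 ≤ Real.sin (2 ^ n * π * δ) ^ 2 / (2 ^ n * π * δ) ^ 2 := by
    refine ⟨?_, four_div_pi_sq_le_sin_sq_div_sq (by positivity) (abs_two_pow_mul_pi_mul_le hδ)⟩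
    rw [h4, mul_assoc (2 ^ n) π δ]
    exact div_mul_sq_le_one_div_sq_mul_div_sin_sq (by positivity) (hsin hδ0 hδ) _ (sq_nonneg _)
  refine ⟨fun δ hδ0 hδ => bounds δ (abs_pos.mp hδ0) hδ, fun δ hδ => ?_⟩
  rcases eq_or_ne δ 0 with rfl | hδ0
  · simp only [one_div, ofReal_zero, mul_zero, zero_mul, Complex.exp_zero, sum_const, card_range,
      nsmul_eq_mul, Nat.cast_pow, Nat.cast_ofNat, mul_one, ne_eq, pow_eq_zero_iff',
      OfNat.ofNat_ne_zero, false_and, not_false_eq_true, inv_mul_cancel₀, norm_one, one_pow]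
    rw [div_le_one (by positivity)]
    nlinarith [pi_gt_three]
  · rw [norm_mul, mul_pow, norm_sum_range_exp_sq _ (hsin hδ0 hδ)]
    push_cast
    rw [norm_div, norm_one, norm_pow, RCLike.norm_ofNat, div_pow, one_pow, ← h4]
    obtain ⟨hle, hge⟩ := bounds δ hδ0 hδ
    exact hge.trans hle
end
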